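/- arXiv:2303.08436 — 2 statements merged into one kernel-verified Lean document; each statement's English description precedes it below -/
import Mathlib

section
/- Let (Ω, μ) be a σ-finite measure space and let T be a bounded linear operator on L²(Ω). If for every measurable set E ⊆ Ω of finite measure one has T(χ_E) = χ_E · T(χ_E) (pointwise almost everywhere), then there exists θ ∈ L^∞(Ω) such that T(h) = θ · h for all h ∈ L²(Ω). -/
open MeasureTheory
open scoped ENNReal

/-!
Additivity of `T` and the hypothesis give `T χ_B = T χ_A` a.e. on `A` whenever `A ⊆ B`, so the
functions `T χ_{S n}` on the spanning sets `S n` of `μ` glue to one `θ` with `T χ_E = θ χ_E` for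
every `E` of finite measure. Then `‖θ χ_E‖_p ≤ ‖T‖ ‖χ_E‖_p` for all such `E` forces
`‖θ‖_∞ ≤ ‖T‖`, so multiplication by `θ` is a bounded operator on `Lᵖ`; it agrees with `T` on
indicators, whose span is dense.
-/

namespace MeasureTheory

variable {Ω : Type*} [MeasurableSpace Ω] {μ : Measure Ω}

theorem exists_stronglyMeasurable_ae_eq_restrict_spanningSets [SigmaFinite μ] {β : Type*}
    [TopologicalSpace β] [TopologicalSpace.PseudoMetrizableSpace β] (g : ℕ → Ω → β)
    (hg : ∀ n, AEStronglyMeasurable (g n) μ)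
    (hcompat : ∀ ⦃m n⦄, m ≤ n → g n =ᵐ[μ.restrict (spanningSets μ m)] g m) :
    ∃ θ : Ω → β, StronglyMeasurable θ ∧ ∀ n, θ =ᵐ[μ.restrict (spanningSets μ n)] g n := by
  set θ : Ω → β := fun x => g (spanningSetsIndex μ x) x
  have hθ : ∀ n, θ =ᵐ[μ.restrict (spanningSets μ n)] g n := by
    intro n
    have hle : ∀ᵐ x ∂μ, ∀ m, m ≤ n → x ∈ spanningSets μ m → g n x = g m x :=
      ae_all_iff.2 fun m => by
        by_cases hmn : m ≤ n
        · filter_upwards [(ae_restrict_iff' (measurableSet_spanningSets μ m)).1 (hcompat hmn)]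
            with x hx _ using hx
        · exact ae_of_all _ fun _ h => absurd h hmn
    rw [Filter.EventuallyEq, ae_restrict_iff' (measurableSet_spanningSets μ n)]
    filter_upwards [hle] with x hx hxn
    have hindex : spanningSetsIndex μ x ≤ n := by classical exact Nat.find_min' _ hxn
    exact (hx _ hindex (mem_spanningSetsIndex μ x)).symm
  have hθm : AEStronglyMeasurable θ μ := by
    rw [← Measure.restrict_univ (μ := μ), ← iUnion_spanningSets μ,
      aestronglyMeasurable_iUnion_iff]
    exact fun n => (hg n).restrict.congr (hθ n).symm
  exact ⟨hθm.mk θ, hθm.stronglyMeasurable_mk,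
    fun n => (hθm.ae_eq_mk.filter_mono ae_restrict_le).symm.trans (hθ n)⟩

theorem ae_enorm_le_of_eLpNorm_indicator_le [SigmaFinite μ] {E : Type*} [NormedAddCommGroup E]
    {p : ℝ≥0∞} (hp0 : p ≠ 0) (hp : p ≠ ∞) {θ : Ω → E} (hθ : AEStronglyMeasurable θ μ)
    {C : ℝ≥0∞} (h : ∀ s, MeasurableSet s → μ s < ∞ →
      eLpNorm (s.indicator θ) p μ ≤ C * μ s ^ (1 / p.toReal)) :
    ∀ᵐ x ∂μ, ‖θ x‖ₑ ≤ C := by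
  have hq : 0 < p.toReal := ENNReal.toReal_pos hp0 hp
  have hpow : ∀ᵐ x ∂μ, ‖θ x‖ₑ ^ p.toReal ≤ C ^ p.toReal := by
    refine ae_le_of_forall_setLIntegral_le_of_sigmaFinite₀ (g := fun _ => C ^ p.toReal)
      (hθ.enorm.pow_const _) fun s hs hμs => ?_
    set q := p.toReal
    calc ∫⁻ x in s, ‖θ x‖ₑ ^ q ∂μ = eLpNorm (s.indicator θ) p μ ^ q := by
          rw [lintegral_rpow_enorm_eq_rpow_eLpNorm' hq, ← eLpNorm_eq_eLpNorm' hp0 hp,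
            eLpNorm_indicator_eq_eLpNorm_restrict hs]
      _ ≤ (C * μ s ^ (1 / q)) ^ q := by gcongr; exact h s hs hμs
      _ = ∫⁻ _ in s, C ^ q ∂μ := by
          rw [setLIntegral_const, ENNReal.mul_rpow_of_nonneg _ _ hq.le, ← ENNReal.rpow_mul,
            one_div_mul_cancel hq.ne', ENNReal.rpow_one]
  filter_upwards [hpow] with x hx
  exact (ENNReal.rpow_le_rpow_iff hq).1 hx

variable {𝕜 : Type*} [NontriviallyNormedField 𝕜] {p : ℝ≥0∞}

theorem indicatorConstLp_eq_smul_one {s : Set Ω} (hs : MeasurableSet s) (hμs : μ s ≠ ∞) (c : 𝕜) :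
    indicatorConstLp p hs hμs c = c • indicatorConstLp p hs hμs (1 : 𝕜) := by
  ext1
  filter_upwards [indicatorConstLp_coeFn (p := p) (hs := hs) (hμs := hμs) (c := c),
    Lp.coeFn_smul c (indicatorConstLp p hs hμs (1 : 𝕜)),
    indicatorConstLp_coeFn (p := p) (hs := hs) (hμs := hμs) (c := (1 : 𝕜))] with x hc hsmul h1
  rw [hc, hsmul, Pi.smul_apply, h1, smul_eq_mul]
  by_cases hx : x ∈ s <;> simp [hx]

variable [Fact (1 ≤ p)]

theorem Lp.continuousLinearMap_ext_indicatorConstLp {F : Type*} [NormedAddCommGroup F]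
    [NormedSpace 𝕜 F] (hp : p ≠ ∞) {T M : Lp 𝕜 p μ →L[𝕜] F}
    (h : ∀ (s : Set Ω) (hs : MeasurableSet s) (hμs : μ s ≠ ∞),
      T (indicatorConstLp p hs hμs 1) = M (indicatorConstLp p hs hμs 1)) :
    T = M := by
  ext f
  induction f using Lp.induction hp with
  | indicatorConst c hs hμs =>
    simp only [Lp.simpleFunc.coe_indicatorConst, indicatorConstLp_eq_smul_one hs hμs.ne c,
      map_smul, h]
  | add _ _ _ hTf hTg => rw [map_add, map_add, hTf, hTg]
  | isClosed => exact isClosed_eq T.continuous M.continuous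

theorem coeFn_holderL_mul {θ : Ω → 𝕜} (hθ : MemLp θ ∞ μ) (f : Lp 𝕜 p μ) :
    (ContinuousLinearMap.mul 𝕜 𝕜).holderL μ ∞ p p (hθ.toLp θ) f =ᵐ[μ] fun x => θ x * f x := by
  filter_upwards [ContinuousLinearMap.coeFn_holder (ContinuousLinearMap.mul 𝕜 𝕜) (r := p)
    (hθ.toLp θ) f, hθ.coeFn_toLp] with x hx hθx
  rw [ContinuousLinearMap.holderL_apply_apply, hx, hθx, ContinuousLinearMap.mul_apply']

def IsLocalOnIndicators (T : Lp 𝕜 p μ →L[𝕜] Lp 𝕜 p μ) : Prop :=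
  ∀ (E : Set Ω) (hE : MeasurableSet E) (hμE : μ E ≠ ∞),
    (T (indicatorConstLp p hE hμE (1 : 𝕜)) : Ω → 𝕜) =ᵐ[μ.restrict Eᶜ] 0

theorem isLocalOnIndicators_of_ae_eq_indicator_mul {T : Lp 𝕜 p μ →L[𝕜] Lp 𝕜 p μ}
    (h : ∀ (E : Set Ω) (hE : MeasurableSet E) (hμE : μ E ≠ ∞),
      (T (indicatorConstLp p hE hμE (1 : 𝕜)) : Ω → 𝕜) =ᵐ[μ]
        fun x => E.indicator (fun _ => (1 : 𝕜)) x * (T (indicatorConstLp p hE hμE 1) : Ω → 𝕜) x) :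
    IsLocalOnIndicators T := by
  intro E hE hμE
  rw [Filter.EventuallyEq, ae_restrict_iff' hE.compl]
  filter_upwards [h E hE hμE] with x hx hxE
  rw [hx, Set.indicator_of_notMem hxE, zero_mul, Pi.zero_apply]

namespace IsLocalOnIndicators

variable {T : Lp 𝕜 p μ →L[𝕜] Lp 𝕜 p μ}

theorem ae_restrict_eq_of_subset (hT : IsLocalOnIndicators T) {A B : Set Ω}
    (hA : MeasurableSet A) (hB : MeasurableSet B) (hμA : μ A ≠ ∞) (hμB : μ B ≠ ∞) (hAB : A ⊆ B) :
    (T (indicatorConstLp p hB hμB (1 : 𝕜)) : Ω → 𝕜) =ᵐ[μ.restrict A]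
      T (indicatorConstLp p hA hμA 1) := by
  obtain ⟨C, hC, hAC, rfl⟩ : ∃ C, MeasurableSet C ∧ Disjoint A C ∧ B = A ∪ C :=
    ⟨B \ A, hB.diff hA, Set.disjoint_sdiff_right, (Set.union_sdiff_cancel hAB).symm⟩
  have hμC : μ C ≠ ∞ := measure_ne_top_of_subset Set.subset_union_right hμB
  rw [indicatorConstLp_disjoint_union hA hC hμA hμC hAC, map_add]
  filter_upwards [ae_restrict_of_ae (Lp.coeFn_add (T (indicatorConstLp p hA hμA (1 : 𝕜)))
      (T (indicatorConstLp p hC hμC 1))),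
    ae_restrict_of_ae_restrict_of_subset hAC.subset_compl_right (hT C hC hμC)] with x hadd hzero
  rw [hadd, Pi.add_apply, hzero, Pi.zero_apply, add_zero]

theorem exists_ae_eq_indicator [SigmaFinite μ] (hT : IsLocalOnIndicators T) :
    ∃ θ : Ω → 𝕜, StronglyMeasurable θ ∧ ∀ (E : Set Ω) (hE : MeasurableSet E) (hμE : μ E ≠ ∞),
      (T (indicatorConstLp p hE hμE (1 : 𝕜)) : Ω → 𝕜) =ᵐ[μ] E.indicator θ := by
  have hS := measurableSet_spanningSets μ
  have hμS n : μ (spanningSets μ n) ≠ ∞ := (measure_spanningSets_lt_top μ n).ne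
  obtain ⟨θ, hθm, hθ⟩ := exists_stronglyMeasurable_ae_eq_restrict_spanningSets
    (fun n => ⇑(T (indicatorConstLp p (hS n) (hμS n) (1 : 𝕜))))
    (fun n => Lp.aestronglyMeasurable _)
    (fun m n hmn => hT.ae_restrict_eq_of_subset _ _ _ _ (monotone_spanningSets μ hmn))
  refine ⟨θ, hθm, fun E hE hμE => ?_⟩
  have on_E : (T (indicatorConstLp p hE hμE (1 : 𝕜)) : Ω → 𝕜) =ᵐ[μ.restrict E] θ := by
    have hcover : μ.restrict E = μ.restrict (⋃ n, E ∩ spanningSets μ n) := by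
      rw [← Set.inter_iUnion, iUnion_spanningSets, Set.inter_univ]
    rw [Filter.EventuallyEq, hcover, ae_restrict_iUnion_iff]
    intro n
    have hEn := hE.inter (hS n)
    have hμEn : μ (E ∩ spanningSets μ n) ≠ ∞ :=
      measure_ne_top_of_subset Set.inter_subset_left hμE
    calc (T (indicatorConstLp p hE hμE (1 : 𝕜)) : Ω → 𝕜)
        =ᵐ[μ.restrict (E ∩ spanningSets μ n)] T (indicatorConstLp p hEn hμEn 1) :=
          hT.ae_restrict_eq_of_subset _ _ _ _ Set.inter_subset_left
      _ =ᵐ[μ.restrict (E ∩ spanningSets μ n)] T (indicatorConstLp p (hS n) (hμS n) 1) :=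
          (hT.ae_restrict_eq_of_subset _ _ _ _ Set.inter_subset_right).symm
      _ =ᵐ[μ.restrict (E ∩ spanningSets μ n)] θ :=
          .symm (ae_restrict_of_ae_restrict_of_subset Set.inter_subset_right (hθ n))
  exact ae_of_ae_restrict_of_ae_restrict_compl E
    (on_E.trans (indicator_ae_eq_restrict hE).symm)
    ((hT E hE hμE).trans (indicator_ae_eq_restrict_compl hE).symm)

end IsLocalOnIndicators

section Multiplier

variable {T : Lp 𝕜 p μ →L[𝕜] Lp 𝕜 p μ} {θ : Ω → 𝕜}

theorem eLpNorm_top_le_opENorm_of_ae_eq_indicator [SigmaFinite μ] (hp : p ≠ ∞)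
    (hθm : AEStronglyMeasurable θ μ)
    (hθ : ∀ (E : Set Ω) (hE : MeasurableSet E) (hμE : μ E ≠ ∞),
      (T (indicatorConstLp p hE hμE (1 : 𝕜)) : Ω → 𝕜) =ᵐ[μ] E.indicator θ) :
    eLpNorm θ ∞ μ ≤ ‖T‖ₑ := by
  have hp0 : p ≠ 0 := (zero_lt_one.trans_le Fact.out).ne'
  rw [eLpNorm_exponent_top]
  refine eLpNormEssSup_le_of_ae_enorm_bound <|
    ae_enorm_le_of_eLpNorm_indicator_le hp0 hp hθm fun s hs hμs => ?_
  calc eLpNorm (s.indicator θ) p μ = ‖T (indicatorConstLp p hs hμs.ne (1 : 𝕜))‖ₑ := by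
        rw [Lp.enorm_def, eLpNorm_congr_ae (hθ s hs hμs.ne)]
    _ ≤ ‖T‖ₑ * ‖indicatorConstLp p hs hμs.ne (1 : 𝕜)‖ₑ := T.le_opENorm _
    _ ≤ ‖T‖ₑ * (‖(1 : 𝕜)‖ₑ * μ s ^ (1 / p.toReal)) := by gcongr; exact enorm_indicatorConstLp_le
    _ = ‖T‖ₑ * μ s ^ (1 / p.toReal) := by rw [enorm_one, one_mul]

theorem eq_holderL_mul_of_ae_eq_indicator (hp : p ≠ ∞) (hθtop : MemLp θ ∞ μ)
    (hθ : ∀ (E : Set Ω) (hE : MeasurableSet E) (hμE : μ E ≠ ∞),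
      (T (indicatorConstLp p hE hμE (1 : 𝕜)) : Ω → 𝕜) =ᵐ[μ] E.indicator θ) :
    T = (ContinuousLinearMap.mul 𝕜 𝕜).holderL μ ∞ p p (hθtop.toLp θ) := by
  refine Lp.continuousLinearMap_ext_indicatorConstLp hp fun E hE hμE => Lp.ext ?_
  filter_upwards [hθ E hE hμE, coeFn_holderL_mul hθtop (indicatorConstLp p hE hμE (1 : 𝕜)),
    indicatorConstLp_coeFn (p := p) (hs := hE) (hμs := hμE) (c := (1 : 𝕜))] with x hT hM h1
  rw [hT, hM, h1]
  by_cases hx : x ∈ E <;> simp [hx]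

end Multiplier

end MeasureTheory

/-- Let `(Ω, μ)` be a σ-finite measure space and `T` a bounded linear
operator on `L²(Ω)`. If for every measurable set `E ⊆ Ω` of finite measure one has
`T(χ_E) = χ_E · T(χ_E)` a.e., then there exists `θ ∈ L^∞(Ω)` such that `T h = θ · h`
for all `h ∈ L²(Ω)`. -/
theorem stmt0 {Ω : Type*} [MeasurableSpace Ω] (μ : Measure Ω) [SigmaFinite μ]
    (T : Lp ℂ 2 μ →L[ℂ] Lp ℂ 2 μ)
    (h : ∀ (E : Set Ω) (hE : MeasurableSet E) (hμE : μ E ≠ ∞),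
      (T (indicatorConstLp 2 hE hμE (1 : ℂ)) : Ω → ℂ) =ᵐ[μ]
        fun x => E.indicator (fun _ => (1 : ℂ)) x
          * (T (indicatorConstLp 2 hE hμE (1 : ℂ)) : Ω → ℂ) x) :
    ∃ θ : Ω → ℂ, MemLp θ ∞ μ ∧
      ∀ f : Lp ℂ 2 μ, (T f : Ω → ℂ) =ᵐ[μ] fun x => θ x * (f : Ω → ℂ) x := by
  obtain ⟨θ, hθm, hθ⟩ := (isLocalOnIndicators_of_ae_eq_indicator_mul h).exists_ae_eq_indicator
  have hθtop : MemLp θ ∞ μ := ⟨hθm.aestronglyMeasurable,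
    (eLpNorm_top_le_opENorm_of_ae_eq_indicator ENNReal.ofNat_ne_top hθm.aestronglyMeasurable hθ
      ).trans_lt enorm_lt_top⟩
  refine ⟨θ, hθtop, fun f => ?_⟩
  rw [eq_holderL_mul_of_ae_eq_indicator ENNReal.ofNat_ne_top hθtop hθ]
  exact coeFn_holderL_mul hθtop f
end

section
/- Let n ≥ 1, (N, τ_N) a normalized tracial von Neumann algebra, and d₁, …, d_n unitaries in N. Let σ be the shift *-automorphism on the infinite tensor product N^∞ = ⨂_{ℤ} N (with respect to τ_N), and on 𝓜 = M_n(N^∞) define S = Id_{M_n} ⊗ σ and Γ([y_{ij}]) = [d_i* y_{ij} d_j] (with d_i* , d_j placed in tensor position 0), and U = Γ ∘ S. Then for all k ≥ 0 and all u, v, a, b ∈ ℂⁿ: ⟨U^k(u ⊗ v ⊗ 1_∞), a ⊗ b ⊗ 1_∞⟩ = Σ_{i,j=1}^n a_i b_j u_j v_i τ_N(d_i* d_j)^k, where u ⊗ v ⊗ 1_∞ denotes the matrix [u_j v_i 1_∞] in M_n(N^∞) and the pairing is given by the trace tr ⊗ τ_∞. -/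
/-- Let `n ≥ 1`, `(N, τ_N)` a normalized tracial von Neumann algebra
and `d₁, …, d_n` unitaries in `N`.  Let `N^∞ = ⨂_ℤ N` be the infinite tensor product with
product trace `τ_∞`, `σ` the shift automorphism and `e : N → N^∞` the embedding in tensor
position `0` (so position `m` is `σ^m ∘ e`, positions `m ≥ 1` commute with position `0`,
and `τ_∞` is multiplicative over distinct positions:
`τ_∞(∏_{m<k} σ^m(e x)) = τ_N(x)^k`).  On `𝓜 = M_n(N^∞)`, let `S = Id ⊗ σ`,
`Γ([y_{ij}]) = [e(d_i)* σ?…]`, i.e. `U = Γ ∘ S` is `(U Y)_{ij} = e(d_i*) σ(Y_{ij}) e(d_j)`.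
Then for all `k ≥ 0` and `u, v, a, b ∈ ℂⁿ`, the pairing of `U^k(u ⊗ v ⊗ 1_∞)` with
`a ⊗ b ⊗ 1_∞` under `tr ⊗ τ_∞` equals `Σ_{i,j} a_i b_j u_j v_i τ_N(d_i* d_j)^k`. -/
theorem stmt13 {N A : Type*}
    [Ring N] [StarRing N] [Algebra ℂ N] [StarModule ℂ N]
    [Ring A] [StarRing A] [Algebra ℂ A] [StarModule ℂ A]
    (τN : N →ₗ[ℂ] ℂ) (τinf : A →ₗ[ℂ] ℂ)
    (hτN1 : τN 1 = 1) (hτNtr : ∀ x y, τN (x * y) = τN (y * x))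
    (hτinf1 : τinf 1 = 1) (hτinftr : ∀ x y, τinf (x * y) = τinf (y * x))
    -- the embedding of `N` in tensor position `0` and the shift automorphism
    (e : N →⋆ₐ[ℂ] A) (σ : A ≃⋆ₐ[ℂ] A)
    -- elements in distinct tensor positions commute
    (hcomm : ∀ (m : ℕ), 0 < m → ∀ (x y : N), Commute (e x) ((⇑σ)^[m] (e y)))
    -- `τ_∞` is the product trace: on an elementary tensor with `x` in positions
    -- `0, 1, …, k-1` it gives `τ_N(x)^k`
    (hprod : ∀ (k : ℕ) (x : N),
      τinf (((List.range k).map fun m => (⇑σ)^[m] (e x)).prod) = (τN x) ^ k)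
    (n : ℕ) (hn : 1 ≤ n)
    (d : Fin n → N) (hd : ∀ i, d i ∈ unitary N)
    (u v a b : Fin n → ℂ) (k : ℕ) :
    (∑ i, ∑ j, a i * b j *
        τinf (((fun Y : Matrix (Fin n) (Fin n) A =>
              Matrix.of fun i j => e (star (d i)) * σ (Y i j) * e (d j))^[k]
            (Matrix.of fun i j => algebraMap ℂ A (u j * v i))) i j))
      = ∑ i, ∑ j, a i * b j * u j * v i * (τN (star (d i) * d j)) ^ k := by
  have key : ∀ (k : ℕ) (i j : Fin n),
      ((fun Y : Matrix (Fin n) (Fin n) A =>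
            Matrix.of fun i j => e (star (d i)) * σ (Y i j) * e (d j))^[k]
          (Matrix.of fun i j => algebraMap ℂ A (u j * v i))) i j
      = (u j * v i) •
          (((List.range k).map fun m => (⇑σ)^[m] (e (star (d i) * d j))).prod) := by
    intro k
    induction k with
    | zero =>
      intro i j
      simp [Algebra.algebraMap_eq_smul_one]
    | succ k ih =>
      intro i j
      rw [Function.iterate_succ_apply']
      show e (star (d i)) * σ (_) * e (d j) = _
      rw [ih i j, map_smul, map_list_prod, List.map_map, mul_smul_comm, smul_mul_assoc]
      congr 1
      have hmap : (List.range k).map (⇑σ ∘ fun m => (⇑σ)^[m] (e (star (d i) * d j)))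
          = (List.range k).map fun m => (⇑σ)^[m + 1] (e (star (d i) * d j)) := by
        refine List.map_congr_left fun m _ => ?_
        simp [Function.comp, Function.iterate_succ_apply']
      rw [hmap]
      have hQ : Commute (e (d j))
          (((List.range k).map fun m => (⇑σ)^[m + 1] (e (star (d i) * d j))).prod) := by
        refine Commute.list_prod_right _ _ fun z hz => ?_
        obtain ⟨m, _, rfl⟩ := List.mem_map.1 hz
        exact hcomm (m + 1) (Nat.succ_pos m) _ _
      rw [mul_assoc, ← hQ.eq, ← mul_assoc, ← map_mul,
        List.range_succ_eq_map, List.map_cons, List.prod_cons, List.map_map]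
      rfl
  refine Finset.sum_congr rfl fun i _ => Finset.sum_congr rfl fun j _ => ?_
  rw [key k i j, map_smul, hprod k (star (d i) * d j)]
  simp [mul_assoc, smul_eq_mul]
end
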